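/- arXiv:1801.01084 — 4 statements merged into one kernel-verified Lean document; each statement's English description precedes it below -/
import Mathlib

section
/- For every complex number z with |z| > 2 and every k > 0, there exists a constant C > 0 (independent of z) such that |z|^k · |∫_{z̄}^{z̄·∞} s^m · W̄(s) · e^{-zs} ds| · |W(z)| ≤ C · e^{-(|z|-1)^2}, where the integral is along the ray {z̄ t : t ≥ 1}. In particular, the difference χ_m^∞(z) − χ_m(z) decays super-exponentially as |z| → ∞, uniformly after multiplication by any fixed power of z. -/
/-!
Along the ray `s = z̄ t`, `t ≥ 1`, the factor `e^{-zs} = e^{-|z|² t}` is tiny, while `W` grows at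
most polynomially: `|W(w)| ≤ ((1 + Σ|a_j|) x)^{Σ c_j}` whenever `|w| ≤ x` and `x ≥ 1`. With
`x = |z| t`, all polynomial factors (including `|z|^k` and `|W(z)|`) are absorbed into a power
`x^n`, and `e^{-|z|² t} ≤ e^{-(|z|-1)²} e^{-x} e^{-t}` for `|z| ≥ 2`. Since `x^n e^{-x} ≤ n!`,
the integrand is bounded by `C e^{-(|z|-1)²} e^{-t}`, which integrates over `t > 1`.
-/

open MeasureTheory Real Set

lemma prod_norm_sub_rpow_le {ι E : Type*} [Fintype ι] [SeminormedAddCommGroup E]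
    (a : ι → E) {c : ι → ℝ} (hc : ∀ i, 0 ≤ c i) {w : E} {x : ℝ} (hx : 1 ≤ x) (hw : ‖w‖ ≤ x) :
    ∏ i, ‖w - a i‖ ^ c i ≤ ((1 + ∑ i, ‖a i‖) * x) ^ ∑ i, c i := by
  have hA : ∀ j, ‖a j‖ ≤ ∑ i, ‖a i‖ := fun j =>
    Finset.single_le_sum (fun i _ => norm_nonneg (a i)) (Finset.mem_univ j)
  have hA0 : 0 ≤ ∑ i, ‖a i‖ := Finset.sum_nonneg fun i _ => norm_nonneg (a i)
  rw [rpow_sum_of_pos (by positivity)]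
  refine Finset.prod_le_prod (fun i _ => by positivity)
    (fun i _ => rpow_le_rpow (norm_nonneg _) ?_ (hc i))
  calc ‖w - a i‖ ≤ x + ∑ i, ‖a i‖ := (norm_sub_le _ _).trans (add_le_add hw (hA i))
    _ ≤ (1 + ∑ i, ‖a i‖) * x := by nlinarith

lemma rpow_mul_exp_neg_le_factorial {x q : ℝ} {n : ℕ} (hx : 1 ≤ x) (hq : q ≤ n) :
    x ^ q * exp (-x) ≤ n.factorial := by
  have hpow : x ^ q ≤ n.factorial * exp x := by
    calc x ^ q ≤ x ^ (n : ℝ) := rpow_le_rpow_of_exponent_le hx hq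
      _ = x ^ n := rpow_natCast x n
      _ ≤ n.factorial * exp x := by
        have := pow_div_factorial_le_exp x (by linarith) n
        rwa [div_le_iff₀ (by positivity), mul_comm] at this
  calc x ^ q * exp (-x) ≤ n.factorial * exp x * exp (-x) := by gcongr
    _ = n.factorial := by rw [mul_assoc, ← exp_add, add_neg_cancel, exp_zero, mul_one]

lemma exp_neg_sq_mul_le {R t : ℝ} (hR : 2 ≤ R) (ht : 1 ≤ t) :
    exp (-(R ^ 2 * t)) ≤ exp (-(R - 1) ^ 2) * exp (-(R * t)) * exp (-t) := by
  rw [← exp_add, ← exp_add, exp_le_exp]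
  nlinarith [mul_nonneg (sub_nonneg.2 ht) (by nlinarith : (0 : ℝ) ≤ R ^ 2 - R - 1)]

lemma mul_norm_setIntegral_Ioi_one_le {E : Type*} [NormedAddCommGroup E] [NormedSpace ℝ E]
    {g : ℝ → E} {c D : ℝ} (hc : 0 ≤ c) (hD : 0 ≤ D)
    (hg : ∀ t, 1 < t → c * ‖g t‖ ≤ D * exp (-t)) :
    c * ‖∫ t in Ioi 1, g t‖ ≤ D := by
  calc c * ‖∫ t in Ioi 1, g t‖ ≤ c * ∫ t in Ioi 1, ‖g t‖ := by
        gcongr; exact norm_integral_le_integral_norm g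
    _ = ∫ t in Ioi 1, c * ‖g t‖ := (integral_const_mul c _).symm
    _ ≤ ∫ t in Ioi 1, D * exp (-t) := by
        refine integral_mono_of_nonneg (ae_of_all _ fun t => by positivity)
          ((integrableOn_exp_neg_Ioi 1).const_mul D) ?_
        filter_upwards [ae_restrict_mem measurableSet_Ioi] with t ht using hg t ht
    _ = D * exp (-1) := by rw [integral_const_mul, integral_exp_neg_Ioi]
    _ ≤ D := mul_le_of_le_one_right hD (exp_le_one_iff.2 (by norm_num))

lemma norm_conj_ray_integrand (W : ℂ → ℂ) (z : ℂ) (m : ℕ) {t : ℝ} (ht : 0 ≤ t) :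
    ‖(starRingEnd ℂ z * t) ^ m * starRingEnd ℂ (W (starRingEnd ℂ (starRingEnd ℂ z * t))) *
        Complex.exp (-(z * (starRingEnd ℂ z * t))) * starRingEnd ℂ z‖ =
      (‖z‖ * t) ^ m * ‖W (z * t)‖ * exp (-(‖z‖ ^ 2 * t)) * ‖z‖ := by
  have hexp : -(z * (starRingEnd ℂ z * t)) = ((-(‖z‖ ^ 2 * t) : ℝ) : ℂ) := by
    rw [← mul_assoc, Complex.mul_conj, Complex.normSq_eq_norm_sq]
    push_cast; ring
  simp only [norm_mul, norm_pow, Complex.norm_conj, map_mul, Complex.conj_conj,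
    Complex.conj_ofReal, hexp, Complex.norm_exp_ofReal, Complex.norm_real, Real.norm_eq_abs,
    abs_of_nonneg ht]

theorem chi_infty_minus_chi_decay_general
    (l : ℕ) (a : Fin l → ℂ)
    (c : Fin l → ℝ) (hc : ∀ i, 0 < c i)
    (W : ℂ → ℂ)
    (hWabs : ∀ z, ‖W z‖ = ∏ j, ‖z - a j‖ ^ (c j))
    (Wb : ℂ → ℂ) (hWb : ∀ s, Wb s = starRingEnd ℂ (W (starRingEnd ℂ s)))
    (m : ℕ) (k : ℝ) (hk : 0 < k) :
    ∃ C : ℝ, 0 < C ∧ ∀ z : ℂ, 2 < ‖z‖ →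
      ‖z‖ ^ k *
        ‖(∫ t in Set.Ioi (1 : ℝ),
          (starRingEnd ℂ z * t) ^ m * Wb (starRingEnd ℂ z * t) *
            Complex.exp (-(z * (starRingEnd ℂ z * t))) * starRingEnd ℂ z)‖ *
        ‖W z‖
      ≤ C * Real.exp (-(‖z‖ - 1) ^ 2) := by
  set L := 1 + ∑ j, ‖a j‖
  set S := ∑ j, c j
  set n := ⌈k + S + m + S + 1⌉₊
  have hW : ∀ {w : ℂ} {x : ℝ}, 1 ≤ x → ‖w‖ ≤ x → ‖W w‖ ≤ L ^ S * x ^ S := fun hx hw => by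
    rw [hWabs, ← mul_rpow (by positivity) (by linarith)]
    exact prod_norm_sub_rpow_le a (fun i => (hc i).le) hx hw
  refine ⟨(L ^ S) ^ 2 * n.factorial, by positivity, fun z hz => ?_⟩
  simp only [hWb]
  rw [mul_right_comm]
  refine mul_norm_setIntegral_Ioi_one_le (by positivity) (by positivity) fun t ht => ?_
  set R := ‖z‖
  set x := R * t
  have hRx : R ≤ x := le_mul_of_one_le_right (by linarith) ht.le
  have hx : 1 ≤ x := by linarith
  rw [norm_conj_ray_integrand W z m (by linarith)]
  calc R ^ k * ‖W z‖ * (x ^ m * ‖W (z * t)‖ * exp (-(R ^ 2 * t)) * R)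
      ≤ x ^ k * (L ^ S * x ^ S) * (x ^ (m : ℝ) * (L ^ S * x ^ S) *
          (exp (-(R - 1) ^ 2) * exp (-x) * exp (-t)) * x ^ (1 : ℝ)) := by
        rw [rpow_natCast, rpow_one]
        gcongr
        · exact hW hx hRx
        · exact hW hx (by simp [R, x, abs_of_pos (by linarith : (0 : ℝ) < t)])
        · exact exp_neg_sq_mul_le hz.le ht.le
    _ = (L ^ S) ^ 2 * (x ^ (k + S + m + S + 1) * exp (-x)) * exp (-(R - 1) ^ 2) * exp (-t) := by
        simp only [rpow_add (by linarith : 0 < x)]; ring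
    _ ≤ (L ^ S) ^ 2 * n.factorial * exp (-(R - 1) ^ 2) * exp (-t) := by
        gcongr; exact rpow_mul_exp_neg_le_factorial hx (Nat.le_ceil _)

/-- Super-exponential decay of `χ_m^∞ - χ_m`.  With `W` an analytic
branch of `∏ (z - a j)^(c j)` off the cuts `B_j = {a j t : t ≥ 1}`, and
`W̄(s) = conj (W (conj s))`, for every `m` and every real `k > 0` there is a
constant `C > 0` (independent of `z`) such that for all `|z| > 2`,
`|z|^k * |∫_{z̄}^{z̄·∞} s^m W̄(s) e^{-zs} ds| * |W(z)| ≤ C * exp (-(|z|-1)^2)`,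
the integral being along the ray `{z̄ t : t ≥ 1}`. -/
theorem chi_infty_minus_chi_decay
    (l : ℕ) (hl : 0 < l) (a : Fin l → ℂ) (ha0 : ∀ i, a i ≠ 0)
    (ha : Function.Injective fun i => Complex.arg (a i))
    (c : Fin l → ℝ) (hc : ∀ i, 0 < c i)
    (W : ℂ → ℂ)
    (hW : DifferentiableOn ℂ W {z | ∀ j, ∀ t : ℝ, 1 ≤ t → z ≠ a j * t})
    (hWabs : ∀ z, ‖W z‖ = ∏ j, ‖z - a j‖ ^ (c j))
    (Wb : ℂ → ℂ) (hWb : ∀ s, Wb s = starRingEnd ℂ (W (starRingEnd ℂ s)))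
    (m : ℕ) (k : ℝ) (hk : 0 < k) :
    ∃ C : ℝ, 0 < C ∧ ∀ z : ℂ, 2 < ‖z‖ →
      ‖z‖ ^ k *
        ‖(∫ t in Set.Ioi (1 : ℝ),
          (starRingEnd ℂ z * t) ^ m * Wb (starRingEnd ℂ z * t) *
            Complex.exp (-(z * (starRingEnd ℂ z * t))) * starRingEnd ℂ z)‖ *
        ‖W z‖
      ≤ C * Real.exp (-(‖z‖ - 1) ^ 2) :=
  chi_infty_minus_chi_decay_general l a c hc W hWabs Wb hWb m k hk
end

section
/- For z in ℂ ∖ B (with arg z ≠ arg a_j for all j), the function χ_m satisfies ∂χ_m/∂z̄ (z) = z̄^m |W(z)|² e^{-|z|²}. -/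
/-!
Write `χ_m(z) = Φ(z, z̄)` with `Φ(u, w) = W(u) ∫₀¹ k(u, wt) w dt` and `k(u, s) = s^m W̄(s) e^{-us}`.
Since `ℂ ∖ B` is star-shaped about `0`, `k` is holomorphic near `(u, wt)` for `(u, w)` close to
`(z, z̄)` and `t ∈ [0, 1]`, so `Φ` is holomorphic there, and the Wirtinger derivative of
`z ↦ Φ(z, z̄)` is `∂_w Φ(z, z̄)`. As `W` is holomorphic this is `W(z) ∂_w ∫₀¹ k(z, wt) w dt` at
`w = z̄`, and `∂_w [k(u, wt) w] = ∂_t [t k(u, wt)]` turns the last derivative into `k(z, z̄)`.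
Finally `W(z) k(z, z̄) = z̄^m W(z) conj(W(z)) e^{-z z̄}`.
-/

open MeasureTheory

/-- The union of cuts `B = ∪_j {a j t : t ≥ 1}`. -/
def cutSet (l : ℕ) (a : Fin l → ℂ) : Set ℂ :=
  ⋃ j, {z : ℂ | ∃ t : ℝ, 1 ≤ t ∧ z = a j * t}

/-- `χ_m(z) = W(z) ∫_0^{z̄} s^m W̄(s) e^{-zs} ds` along the segment from `0` to `z̄`. -/
noncomputable def chiM (W Wb : ℂ → ℂ) (m : ℕ) (z : ℂ) : ℂ :=
  W z * ∫ t in (0:ℝ)..1,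
    (starRingEnd ℂ z * t) ^ m * Wb (starRingEnd ℂ z * t) *
      Complex.exp (-(z * (starRingEnd ℂ z * t))) * starRingEnd ℂ z

open ComplexConjugate Set Filter Topology
open scoped Interval

theorem hasFDerivAt_intervalIntegral_of_continuousOn {𝕜 E H : Type*} [RCLike 𝕜]
    [NormedAddCommGroup E] [NormedSpace ℝ E] [NormedSpace 𝕜 E]
    [NormedAddCommGroup H] [NormedSpace 𝕜 H]
    {F : H → ℝ → E} {F' : H → ℝ → H →L[𝕜] E} {K : Set H} {x₀ : H} {a b : ℝ}
    (hK : IsCompact K) (hx₀ : K ∈ 𝓝 x₀) (hF : ∀ x ∈ K, ContinuousOn (F x) [[a, b]])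
    (hF' : ContinuousOn (fun q : H × ℝ => F' q.1 q.2) (K ×ˢ [[a, b]]))
    (hFF' : ∀ x ∈ K, ∀ t ∈ [[a, b]], HasFDerivAt (F · t) (F' x t) x) :
    HasFDerivAt (fun x => ∫ t in a..b, F x t) (∫ t in a..b, F' x₀ t) x₀ := by
  obtain ⟨M, hM⟩ := (hK.prod isCompact_uIcc).exists_bound_of_continuousOn hF'
  have hF'x₀ : ContinuousOn (F' x₀) [[a, b]] :=
    hF'.comp (Continuous.prodMk_right x₀).continuousOn
      fun t ht => ⟨mem_of_mem_nhds hx₀, ht⟩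
  exact intervalIntegral.hasFDerivAt_integral_of_dominated_of_fderiv_le (bound := fun _ => M)
    hx₀ (eventually_of_mem hx₀ fun x hx =>
      ((hF x hx).mono uIoc_subset_uIcc).aestronglyMeasurable measurableSet_uIoc)
    (hF x₀ (mem_of_mem_nhds hx₀)).intervalIntegrable
    ((hF'x₀.mono uIoc_subset_uIcc).aestronglyMeasurable measurableSet_uIoc)
    (ae_of_all _ fun t ht x hx => hM (x, t) ⟨hx, uIoc_subset_uIcc ht⟩)
    intervalIntegrable_const
    (ae_of_all _ fun t ht x hx => hFF' x hx t (uIoc_subset_uIcc ht))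

theorem HasFDerivAt.exists_wirtinger_comp_conj {Φ : ℂ × ℂ → ℂ} {L : ℂ × ℂ →L[ℂ] ℂ}
    {z : ℂ} (h : HasFDerivAt Φ L (z, conj z)) :
    ∃ f : ℂ →L[ℝ] ℂ, HasFDerivAt (fun x => Φ (x, conj x)) f z ∧
      (f 1 + Complex.I * f Complex.I) / 2 = L (0, 1) := by
  refine ⟨(L.restrictScalars ℝ).comp
    ((ContinuousLinearMap.id ℝ ℂ).prod Complex.conjCLE.toContinuousLinearMap),
    h.restrictScalars ℝ |>.comp z ((hasFDerivAt_id z).prodMk Complex.conjCLE.hasFDerivAt), ?_⟩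
  have hsplit : ∀ v : ℂ × ℂ, L v = v.1 * L (1, 0) + v.2 * L (0, 1) := fun v => by
    conv_lhs => rw [show v = v.1 • ((1 : ℂ), (0 : ℂ)) + v.2 • ((0 : ℂ), (1 : ℂ)) by
      ext <;> simp]
    rw [map_add, map_smul, map_smul, smul_eq_mul, smul_eq_mul]
  simp only [ContinuousLinearMap.comp_apply, ContinuousLinearMap.prod_apply,
    ContinuousLinearMap.coe_restrictScalars', ContinuousLinearMap.id_apply,
    ContinuousLinearEquiv.coe_coe, Complex.conjCLE_apply, map_one, Complex.conj_I]
  rw [hsplit (1, 1), hsplit (Complex.I, -Complex.I)]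
  linear_combination (L (1, 0) - L (0, 1)) / 2 * Complex.I_sq

-- The segment parameter is complex, so that the `p`-derivative of the integrand is a
-- restriction of the derivative of one holomorphic function of `(p, τ)`.
noncomputable def segmentIntegrand (k : ℂ × ℂ → ℂ) (q : (ℂ × ℂ) × ℂ) : ℂ :=
  k (q.1.1, q.1.2 * q.2) * q.1.2

noncomputable def segmentIntegral (k : ℂ × ℂ → ℂ) (p : ℂ × ℂ) : ℂ :=
  ∫ t in (0 : ℝ)..1, segmentIntegrand k (p, t)

theorem hasDerivAt_ofReal_mul_comp_segment {k : ℂ × ℂ → ℂ} {p : ℂ × ℂ} {t : ℝ}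
    (hk : DifferentiableAt ℂ k (p.1, p.2 * t)) :
    HasDerivAt (fun s : ℝ => (s : ℂ) * k (p.1, p.2 * s))
      (fderiv ℂ (segmentIntegrand k) (p, t) ((0, 1), 0)) t := by
  set h : ℂ → ℂ := fun σ => k (p.1, σ)
  have hh : HasDerivAt h (deriv h (p.2 * t)) (p.2 * t) :=
    (hk.comp _ (hasFDerivAt_prodMk_right p.1 _).differentiableAt).hasDerivAt
  have hline : HasDerivAt (fun w : ℂ => ((p.1, w), (t : ℂ))) ((0, 1), 0) p.2 :=
    ((hasDerivAt_const _ _).prodMk (hasDerivAt_id _)).prodMk (hasDerivAt_const _ _)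
  have hg : DifferentiableAt ℂ (segmentIntegrand k) (p, t) := by
    unfold segmentIntegrand
    fun_prop
  have hw := (hh.comp p.2 ((hasDerivAt_id p.2).mul_const (t : ℂ))).mul (hasDerivAt_id p.2)
  have hs :=
    (hasDerivAt_id (t : ℂ)).mul (hh.comp (t : ℂ) ((hasDerivAt_id (t : ℂ)).const_mul p.2))
  convert hs.comp_ofReal using 1
  · rfl
  have hw' := hg.hasFDerivAt.comp_hasDerivAt p.2 hline
  rw [hw'.unique hw]
  simp only [id_eq, Function.comp_apply]
  ring

theorem exists_closedBall_prod_subset {X Y : Type*} [PseudoMetricSpace X] [TopologicalSpace Y]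
    {x₀ : X} {T : Set Y} (hT : IsCompact T) {N : Set (X × Y)} (hN : IsOpen N)
    (hx₀T : ∀ t ∈ T, (x₀, t) ∈ N) : ∃ ε > 0, Metric.closedBall x₀ ε ×ˢ T ⊆ N := by
  obtain ⟨U, V, hU, -, hx₀U, hTV, hUV⟩ := generalized_tube_lemma isCompact_singleton hT hN
    (by rintro ⟨x, t⟩ ⟨rfl, ht⟩; exact hx₀T t ht)
  obtain ⟨ε, hε, hεU⟩ := Metric.nhds_basis_closedBall.mem_iff.1 (hU.mem_nhds (hx₀U rfl))
  exact ⟨ε, hε, (prod_mono hεU hTV).trans hUV⟩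

theorem exists_hasFDerivAt_segmentIntegral {k : ℂ × ℂ → ℂ} {O : Set (ℂ × ℂ)}
    (hO : IsOpen O) (hk : ContDiffOn ℂ 1 k O) {p₀ : ℂ × ℂ}
    (hp₀ : ∀ t ∈ Icc (0 : ℝ) 1, (p₀.1, p₀.2 * t) ∈ O) :
    ∃ L : ℂ × ℂ →L[ℂ] ℂ, HasFDerivAt (segmentIntegral k) L p₀ ∧ L (0, 1) = k p₀ := by
  rw [← uIcc_of_le zero_le_one] at hp₀
  set O' : Set ((ℂ × ℂ) × ℂ) := {q | (q.1.1, q.1.2 * q.2) ∈ O}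
  have hO' : IsOpen O' := hO.preimage (by fun_prop)
  have hg : ContDiffOn ℂ 1 (segmentIntegrand k) O' :=
    (hk.comp (by fun_prop : ContDiff ℂ 1 fun q : (ℂ × ℂ) × ℂ => (q.1.1, q.1.2 * q.2)).contDiffOn
      fun q hq => hq).mul (by fun_prop)
  obtain ⟨ε, hε, hεO'⟩ := exists_closedBall_prod_subset isCompact_uIcc
    (hO'.preimage (by fun_prop : Continuous fun q : (ℂ × ℂ) × ℝ => (q.1, (q.2 : ℂ)))) hp₀
  have hK : ∀ p ∈ Metric.closedBall p₀ ε, ∀ t ∈ [[(0 : ℝ), 1]], (p, (t : ℂ)) ∈ O' :=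
    fun p hp t ht => hεO' (mk_mem_prod hp ht)
  set F' : ℂ × ℂ → ℝ → ℂ × ℂ →L[ℂ] ℂ := fun p t =>
    (fderiv ℂ (segmentIntegrand k) (p, t)).comp (.inl ℂ (ℂ × ℂ) ℂ)
  have hF' : ContinuousOn (fun q : (ℂ × ℂ) × ℝ => F' q.1 q.2)
      (Metric.closedBall p₀ ε ×ˢ [[(0 : ℝ), 1]]) :=
    ((hg.continuousOn_fderiv_of_isOpen hO' le_rfl).comp (by fun_prop)
      fun q hq => hK q.1 hq.1 q.2 hq.2).clm_comp continuousOn_const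
  have hL := hasFDerivAt_intervalIntegral_of_continuousOn (isCompact_closedBall p₀ ε)
    (Metric.closedBall_mem_nhds p₀ hε) (F := fun p t => segmentIntegrand k (p, t))
    (fun p hp => hg.continuousOn.comp (by fun_prop) fun t ht => hK p hp t ht) hF'
    fun p hp t ht => by
      have hd := (hg.differentiableOn one_ne_zero _ (hK p hp t ht)).differentiableAt
        (hO'.mem_nhds (hK p hp t ht))
      exact hd.hasFDerivAt.comp p (hasFDerivAt_prodMk_left (𝕜 := ℂ) p (t : ℂ))
  refine ⟨_, hL, ?_⟩
  have hF'₀ : ContinuousOn (F' p₀) [[(0 : ℝ), 1]] :=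
    hF'.comp (Continuous.prodMk_right p₀).continuousOn
      fun t ht => ⟨Metric.mem_closedBall_self hε.le, ht⟩
  have hderiv : ∀ t ∈ [[(0 : ℝ), 1]],
      HasDerivAt (fun s : ℝ => (s : ℂ) * k (p₀.1, p₀.2 * s)) (F' p₀ t (0, 1)) t :=
    fun t ht => hasDerivAt_ofReal_mul_comp_segment
      ((hk.differentiableOn one_ne_zero _ (hp₀ t ht)).differentiableAt (hO.mem_nhds (hp₀ t ht)))
  rw [ContinuousLinearMap.intervalIntegral_apply hF'₀.intervalIntegrable,
    intervalIntegral.integral_eq_sub_of_hasDerivAt hderiv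
      (hF'₀.clm_apply continuousOn_const).intervalIntegrable]
  simp

theorem isClosed_cutSet (l : ℕ) (a : Fin l → ℂ) : IsClosed (cutSet l a) := by
  refine isClosed_iUnion_of_finite fun j => ?_
  by_cases hj : a j = 0
  · convert isClosed_singleton (x := (0 : ℂ)) using 1
    ext w
    simpa [hj] using fun _ => ⟨1, le_rfl⟩
  · have hray : {w : ℂ | ∃ t : ℝ, 1 ≤ t ∧ w = a j * t} =
        (· / a j) ⁻¹' (Complex.ofReal '' Ici 1) := by
      ext w
      simp only [mem_ofPred_eq, mem_preimage, mem_image, mem_Ici, eq_div_iff hj]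
      exact ⟨fun ⟨t, ht, hw⟩ => ⟨t, ht, by rw [hw, mul_comm]⟩,
        fun ⟨t, ht, hw⟩ => ⟨t, ht, by rw [← hw, mul_comm]⟩⟩
    rw [hray]
    exact (Complex.isometry_ofReal.isClosedEmbedding.isClosedMap _ isClosed_Ici).preimage
      (continuous_id.div_const _)

theorem starConvex_compl_cutSet {l : ℕ} {a : Fin l → ℂ} (ha0 : ∀ j, a j ≠ 0) :
    StarConvex ℝ 0 (cutSet l a)ᶜ := by
  intro y hy s t hs ht hst hmem
  obtain ⟨j, r, hr, hyr⟩ := by simpa [cutSet] using hmem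
  rcases ht.eq_or_lt with rfl | ht
  · have : a j * r = 0 := by simpa using hyr.symm
    exact (mul_ne_zero (ha0 j) (by norm_cast; linarith)) this
  · refine hy (mem_iUnion.2 ⟨j, r / t, ?_, ?_⟩)
    · rw [le_div_iff₀ ht]; linarith
    · rw [Complex.ofReal_div, ← mul_div_assoc, ← hyr]
      have : (t : ℂ) ≠ 0 := by exact_mod_cast ht.ne'
      field_simp

theorem notMem_cutSet_of_forall_ne {l : ℕ} {a : Fin l → ℂ} {z : ℂ}
    (hz : ∀ j, ∀ t : ℝ, 0 < t → z ≠ a j * t) : z ∉ cutSet l a := by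
  simp only [cutSet, mem_iUnion, mem_ofPred_eq, not_exists, not_and]
  exact fun j t ht => hz j t (by linarith)

noncomputable def chiKernel (Wb : ℂ → ℂ) (m : ℕ) (q : ℂ × ℂ) : ℂ :=
  q.2 ^ m * Wb q.2 * Complex.exp (-(q.1 * q.2))

theorem contDiffOn_chiKernel {Wb : ℂ → ℂ} {U : Set ℂ} (hU : IsOpen U)
    (hWb : DifferentiableOn ℂ Wb U) (m : ℕ) :
    ContDiffOn ℂ 1 (chiKernel Wb m) (Prod.snd ⁻¹' U) :=
  ((contDiff_snd.pow m).contDiffOn.mul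
    ((hWb.contDiffOn hU).comp contDiff_snd.contDiffOn fun _ hq => hq)).mul
    (by fun_prop : ContDiff ℂ 1 fun q : ℂ × ℂ => Complex.exp (-(q.1 * q.2))).contDiffOn

theorem chiM_eq_mul_segmentIntegral (W Wb : ℂ → ℂ) (m : ℕ) (z : ℂ) :
    chiM W Wb m z = W z * segmentIntegral (chiKernel Wb m) (z, conj z) :=
  rfl

theorem wirtinger_deriv_chiM_general
    (l : ℕ) (a : Fin l → ℂ) (ha0 : ∀ i, a i ≠ 0)
    (W : ℂ → ℂ) (hW : DifferentiableOn ℂ W (cutSet l a)ᶜ)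
    (Wb : ℂ → ℂ) (hWb : ∀ s, Wb s = starRingEnd ℂ (W (starRingEnd ℂ s)))
    (m : ℕ) (z : ℂ) (hz : ∀ j, ∀ t : ℝ, 0 < t → z ≠ a j * t) :
    ∃ f : ℂ →L[ℝ] ℂ, HasFDerivAt (chiM W Wb m) f z ∧
      (f 1 + Complex.I * f Complex.I) / 2 =
        (starRingEnd ℂ z) ^ m * ((‖W z‖ : ℂ)) ^ 2 *
          Complex.exp (-((‖z‖ : ℂ)) ^ 2) := by
  set V := (cutSet l a)ᶜ
  have hV : IsOpen V := (isClosed_cutSet l a).isOpen_compl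
  have hzV : z ∈ V := notMem_cutSet_of_forall_ne hz
  have hWbV : DifferentiableOn ℂ Wb (conj ⁻¹' V) := fun s hs => by
    rw [funext hWb]
    exact (differentiableAt_conj_conj_iff.2
      (hW.differentiableAt (hV.mem_nhds hs))).differentiableWithinAt
  obtain ⟨L, hL, hL01⟩ := exists_hasFDerivAt_segmentIntegral
    ((hV.preimage Complex.continuous_conj).preimage continuous_snd)
    (contDiffOn_chiKernel (hV.preimage Complex.continuous_conj) hWbV m) (p₀ := (z, conj z))
    fun t ht => by
      simpa [V, mul_comm] using (starConvex_compl_cutSet ha0).smul_mem hzV ht.1 ht.2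
  have hWz := (hW.differentiableAt (hV.mem_nhds hzV)).hasFDerivAt
  have hΦ := (hWz.comp (z, conj z) hasFDerivAt_fst).mul hL
  obtain ⟨f, hf, hf_wirtinger⟩ := hΦ.exists_wirtinger_comp_conj
  refine ⟨f, funext (chiM_eq_mul_segmentIntegral W Wb m) ▸ hf, ?_⟩
  rw [hf_wirtinger]
  simp only [add_apply, smul_apply, ContinuousLinearMap.comp_apply, Function.comp_apply,
    ContinuousLinearMap.coe_fst', smul_eq_mul, hL01, chiKernel, hWb, Complex.conj_conj, mul_zero,
    map_zero, add_zero]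
  rw [← Complex.mul_conj', ← Complex.mul_conj']
  ring

/-- for `z` off the rays through the `a_j` (so `arg z ≠ arg a_j`),
`χ_m` is real-differentiable at `z` and its Wirtinger derivative satisfies
`∂χ_m/∂z̄ (z) = z̄^m |W(z)|² e^{-|z|²}`. -/
theorem wirtinger_deriv_chiM
    (l : ℕ) (hl : 0 < l) (a : Fin l → ℂ) (ha0 : ∀ i, a i ≠ 0)
    (ha : Function.Injective fun i => Complex.arg (a i))
    (c : Fin l → ℝ) (hc : ∀ i, 0 < c i)
    (W : ℂ → ℂ) (hW : DifferentiableOn ℂ W (cutSet l a)ᶜ)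
    (hWabs : ∀ z ∉ cutSet l a,
      ‖W z‖ = ∏ j, (‖z - a j‖) ^ (c j))
    (Wb : ℂ → ℂ) (hWb : ∀ s, Wb s = starRingEnd ℂ (W (starRingEnd ℂ s)))
    (m : ℕ) (z : ℂ) (hz : ∀ j, ∀ t : ℝ, 0 < t → z ≠ a j * t) :
    ∃ f : ℂ →L[ℝ] ℂ, HasFDerivAt (chiM W Wb m) f z ∧
      (f 1 + Complex.I * f Complex.I) / 2 =
        (starRingEnd ℂ z) ^ m * ((‖W z‖ : ℂ)) ^ 2 *
          Complex.exp (-((‖z‖ : ℂ)) ^ 2) :=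
  wirtinger_deriv_chiM_general l a ha0 W hW Wb hWb m z hz
end

section
/- Abstract version of Proposition 2: Let V be a complex vector space and suppose for each multi-index k ∈ ℕ^l we have vectors v_k ∈ V and a linear map z : V → V satisfying (i) z · v_k = Σ_{j=1}^l (c_j + k_j) v_{k − e_j} whenever all k_j ≥ 1-appropriate, with all c_j + k_j ≠ 0, and (ii) v_{k+e_n} − v_{k+e_m} + (ā_n − ā_m) v_k = 0 for n ≠ m with ā_n ≠ ā_m. Then for n = κl + r (0 ≤ r < l) and the balanced multi-index 𝐧 = (κ+1,…,κ+1,κ,…,κ) (κ+1 repeated r times), one has span{v_k : |k| < n} = span{z^k · v_{𝐧 − e_j} : 0 ≤ k < 𝐧_j, 1 ≤ j ≤ l}. -/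
lemma exists_index_le_aux {l : ℕ} (f : Fin l → ℕ) (d : ℕ) (hd : d ≤ ∑ i, f i) :
    ∃ b : Fin l → ℕ, b ≤ f ∧ ∑ i, b i = d := by
  induction d with
  | zero => exact ⟨0, fun i => Nat.zero_le _, by simp⟩
  | succ d IH =>
    obtain ⟨b, hb, hs⟩ := IH (by omega)
    have hex : ∃ i, b i < f i := by
      by_contra h
      push_neg at h
      have : ∑ i, f i ≤ ∑ i, b i := Finset.sum_le_sum (fun i _ => h i)
      omega
    obtain ⟨i, hi⟩ := hex
    refine ⟨b + Pi.single i 1, fun k => ?_, ?_⟩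
    · by_cases hk : k = i
      · subst hk; simpa [Pi.single_apply] using hi
      · simp only [Pi.add_apply, Pi.single_apply, if_neg hk, add_zero]
        exact hb k
    · simp only [Pi.add_apply]
      rw [Finset.sum_add_distrib, hs]
      simp [Finset.sum_pi_single']

lemma exchange_aux {l : ℕ} {ab : Fin l → ℂ}
    {V : Type*} [AddCommGroup V] [Module ℂ V] {v : (Fin l → ℕ) → V}
    (hthree : ∀ (k : Fin l → ℕ) (i j : Fin l), i ≠ j →
      v (k + Pi.single i 1) - v (k + Pi.single j 1) + (ab i - ab j) • v k = 0) :
    ∀ (D : ℕ) (m m' : Fin l → ℕ), (∑ i, (m i - m' i)) ≤ D → (∑ i, m i) = (∑ i, m' i) →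
      v m - v m' ∈ Submodule.span ℂ {x | ∃ p : Fin l → ℕ, (∑ i, p i) < ∑ i, m i ∧ x = v p} := by
  intro D
  induction D with
  | zero =>
    intro m m' hD hdeg
    have hmm : m = m' := by
      funext i
      by_contra hne
      have hle : ∀ k, m k ≤ m' k := by
        intro k
        have h1 : m k - m' k ≤ ∑ x : Fin l, (m x - m' x) :=
          Finset.single_le_sum (f := fun x => m x - m' x)
            (fun x _ => Nat.zero_le _) (Finset.mem_univ k)
        omega
      have : ∑ k, m k < ∑ k, m' k :=
        Finset.sum_lt_sum (fun k _ => hle k) ⟨i, Finset.mem_univ i, lt_of_le_of_ne (hle i) hne⟩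
      omega
    rw [hmm, sub_self]
    exact Submodule.zero_mem _
  | succ D IH =>
    intro m m' hD hdeg
    by_cases hmm : m = m'
    · rw [hmm, sub_self]; exact Submodule.zero_mem _
    · have hBi : ∃ i, m' i < m i := by
        by_contra h
        push_neg at h
        have hne : ∃ i, m i ≠ m' i := by
          by_contra h2; push_neg at h2; exact hmm (funext h2)
        obtain ⟨i, hi⟩ := hne
        have : ∑ k, m k < ∑ k, m' k :=
          Finset.sum_lt_sum (fun k _ => h k) ⟨i, Finset.mem_univ i, lt_of_le_of_ne (h i) hi⟩
        omega
      have hAj : ∃ j, m j < m' j := by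
        by_contra h
        push_neg at h
        have hne : ∃ i, m i ≠ m' i := by
          by_contra h2; push_neg at h2; exact hmm (funext h2)
        obtain ⟨i, hi⟩ := hne
        have : ∑ k, m' k < ∑ k, m k :=
          Finset.sum_lt_sum (fun k _ => h k) ⟨i, Finset.mem_univ i, lt_of_le_of_ne (h i) hi.symm⟩
        omega
      obtain ⟨i, hi⟩ := hBi
      obtain ⟨j, hj⟩ := hAj
      have hij : i ≠ j := by rintro rfl; omega
      set b : Fin l → ℕ := m - Pi.single i 1 with hb
      have hbi : ∀ k, b k = if k = i then m i - 1 else m k := by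
        intro k
        by_cases hk : k = i <;> simp [hb, Pi.single_apply, hk]
      have hmb : m = b + Pi.single i 1 := by
        funext k
        have h6 := hbi k
        rcases eq_or_ne k i with rfl | hk
        · rw [if_pos rfl] at h6
          simp only [Pi.add_apply, Pi.single_eq_same]
          omega
        · rw [if_neg hk] at h6
          simp only [Pi.add_apply, Pi.single_eq_of_ne hk, add_zero]
          omega
      set m'' : Fin l → ℕ := b + Pi.single j 1 with hm''
      have hm''k : ∀ k, m'' k = if k = i then m i - 1 else if k = j then m j + 1 else m k := by
        intro k
        rcases eq_or_ne k i with rfl | hk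
        · simp [hm'', hbi, Pi.single_eq_of_ne hij]
        · rcases eq_or_ne k j with rfl | hk2
          · simp [hm'', hbi, hk]
          · simp [hm'', hbi, hk, hk2, Pi.single_eq_of_ne hk2]
      -- degree facts
      have hsum_b : (∑ k, b k) + 1 = ∑ k, m k := by
        conv_rhs => rw [hmb]
        simp only [Pi.add_apply]
        rw [Finset.sum_add_distrib]
        simp [Finset.sum_pi_single']
      have hsum_m'' : ∑ k, m'' k = ∑ k, m k := by
        have h5 : ∑ k, m'' k = (∑ k, b k) + 1 := by
          simp only [hm'', Pi.add_apply]
          rw [Finset.sum_add_distrib]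
          simp [Finset.sum_pi_single']
        omega
      -- first step: v m - v m'' ∈ span
      have h3 := hthree b i j hij
      have hstep : v m - v m'' = -((ab i - ab j) • v b) := by
        rw [hmb, hm'']
        exact eq_neg_of_add_eq_zero_left h3
      have hmem1 : v m - v m'' ∈
          Submodule.span ℂ {x | ∃ p : Fin l → ℕ, (∑ i, p i) < ∑ i, m i ∧ x = v p} := by
        rw [hstep]
        exact Submodule.neg_mem _ (Submodule.smul_mem _ _
          (Submodule.subset_span ⟨b, by omega, rfl⟩))
      -- second step via IH
      have hdec : ∑ k, (m'' k - m' k) < ∑ k, (m k - m' k) := by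
        refine Finset.sum_lt_sum (fun k _ => ?_) ⟨i, Finset.mem_univ i, ?_⟩
        · have h6 := hm''k k
          rcases eq_or_ne k i with rfl | hk
          · rw [if_pos rfl] at h6; omega
          · rw [if_neg hk] at h6
            rcases eq_or_ne k j with rfl | hk2
            · rw [if_pos rfl] at h6; omega
            · rw [if_neg hk2] at h6; omega
        · have h6 := hm''k i
          rw [if_pos rfl] at h6; omega
      have hmem2 := IH m'' m' (by omega) (by omega)
      rw [hsum_m''] at hmem2
      have heq : v m - v m' = (v m - v m'') + (v m'' - v m') := by abel
      rw [heq]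
      exact Submodule.add_mem _ hmem1 hmem2


/-- abstract Proposition 2: with vectors `v k` in a complex vector
space `V` and a linear map `T` ("multiplication by z") satisfying the recurrence
(i) `T (v k) = Σ_j (c_j + k_j) • v (k - e_j)` and the three-term identity
(ii) `v (k+e_n) - v (k+e_m) + (ā_n - ā_m) • v k = 0`, for `n = κ l + r`
(`0 ≤ r < l`) and the balanced index `𝐧 = (κ+1,…,κ+1,κ,…,κ)` (`κ+1` in the
first `r` slots) one has
`span {v k : |k| < n} = span {T^k (v (𝐧 - e_j)) : 0 ≤ k < 𝐧_j, 1 ≤ j ≤ l}`. -/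
theorem span_vk_eq_span_multiple_orthogonality
    (l : ℕ) (hl : 0 < l) (c : Fin l → ℝ) (hc : ∀ j, 0 < c j)
    (ab : Fin l → ℂ) (hab : Function.Injective ab)
    (V : Type*) [AddCommGroup V] [Module ℂ V]
    (T : V →ₗ[ℂ] V) (v : (Fin l → ℕ) → V)
    (hrec : ∀ k : Fin l → ℕ, (∀ j, 1 ≤ k j) →
      T (v k) = ∑ j, (((c j : ℂ) + (k j : ℕ)) • v (k - Pi.single j 1)))
    (hthree : ∀ (k : Fin l → ℕ) (i j : Fin l), i ≠ j →
      v (k + Pi.single i 1) - v (k + Pi.single j 1) + (ab i - ab j) • v k = 0)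
    (κ r n : ℕ) (hr : r < l) (hn : n = κ * l + r) :
    Submodule.span ℂ {x : V | ∃ k : Fin l → ℕ, (∑ j, k j) < n ∧ x = v k}
      = Submodule.span ℂ {x : V | ∃ j : Fin l, ∃ k : ℕ,
          k < (if (j : ℕ) < r then κ + 1 else κ) ∧
          x = (T ^ k) (v ((fun i : Fin l => if (i : ℕ) < r then κ + 1 else κ)
                - Pi.single j 1))} := by
  classical
  let N : Fin l → ℕ := fun i => if (i : ℕ) < r then κ + 1 else κ
  let Sset : Set V := {x : V | ∃ j : Fin l, ∃ k : ℕ, k < N j ∧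
    x = (T ^ k) (v (N - Pi.single j 1))}
  show Submodule.span ℂ {x : V | ∃ k : Fin l → ℕ, (∑ j, k j) < n ∧ x = v k}
      = Submodule.span ℂ Sset
  have hNlb : ∀ i, κ ≤ N i := by
    intro i; by_cases h : (i : ℕ) < r <;> simp [N, h]
  have hNub : ∀ i, N i ≤ κ + 1 := by
    intro i; by_cases h : (i : ℕ) < r <;> simp [N, h]
  have hsumN : ∑ i, N i = n := by
    have h1 : ∑ i, N i = ∑ i ∈ Finset.range l, (if i < r then κ + 1 else κ) :=
      Fin.sum_univ_eq_sum_range (fun i => if i < r then κ + 1 else κ) l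
    have h2 : ∑ i ∈ Finset.range l, (if i < r then κ + 1 else κ)
        = (∑ i ∈ Finset.Ico 0 r, (if i < r then κ + 1 else κ))
          + ∑ i ∈ Finset.Ico r l, (if i < r then κ + 1 else κ) := by
      rw [Finset.range_eq_Ico, ← Finset.sum_Ico_consecutive _ (Nat.zero_le r) (le_of_lt hr)]
    have h3 : ∑ i ∈ Finset.Ico 0 r, (if i < r then κ + 1 else κ) = r * (κ + 1) := by
      rw [Finset.sum_congr rfl (fun i hi => if_pos (Finset.mem_Ico.mp hi).2)]
      simp [Finset.sum_const, Nat.card_Ico, mul_comm]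
    have h4 : ∑ i ∈ Finset.Ico r l, (if i < r then κ + 1 else κ) = (l - r) * κ := by
      rw [Finset.sum_congr rfl (fun i hi => if_neg (by
        have := (Finset.mem_Ico.mp hi).1; omega))]
      simp [Finset.sum_const, Nat.card_Ico, mul_comm]
    have e1 : (l - r) * κ = l * κ - r * κ := Nat.sub_mul l r κ
    have e2 : r * κ ≤ l * κ := Nat.mul_le_mul_right κ (le_of_lt hr)
    have e3 : r * (κ + 1) = r * κ + r := by ring
    have e4 : κ * l = l * κ := Nat.mul_comm κ l
    omega
  have sub_single_val : ∀ (p : Fin l → ℕ) (j : Fin l) (a : ℕ) (i : Fin l),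
      (p - (Pi.single j a : Fin l → ℕ)) i = if i = j then p j - a else p i := by
    intro p j a i
    rcases eq_or_ne i j with rfl | h
    · simp [Pi.sub_apply]
    · simp [Pi.sub_apply, Pi.single_eq_of_ne h, h]
  have sum_add_single : ∀ (p : Fin l → ℕ) (j : Fin l) (a : ℕ),
      (∑ i, (p + (Pi.single j a : Fin l → ℕ)) i) = (∑ i, p i) + a := by
    intro p j a
    simp only [Pi.add_apply]
    rw [Finset.sum_add_distrib]
    simp [Finset.sum_pi_single']
  have sum_sub_single : ∀ (p : Fin l → ℕ) (j : Fin l) (a : ℕ), a ≤ p j →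
      (∑ i, (p - (Pi.single j a : Fin l → ℕ)) i) + a = ∑ i, p i := by
    intro p j a ha
    have h1 : ∀ i, (p - (Pi.single j a : Fin l → ℕ)) i + (Pi.single j a : Fin l → ℕ) i = p i := by
      intro i
      rcases eq_or_ne i j with rfl | hij
      · simp only [Pi.sub_apply, Pi.single_eq_same]; omega
      · simp [Pi.sub_apply, Pi.single_eq_of_ne hij]
    have h2 : ∑ i, (Pi.single j a : Fin l → ℕ) i = a := by simp [Finset.sum_pi_single']
    calc (∑ i, (p - (Pi.single j a : Fin l → ℕ)) i) + a
        = (∑ i, (p - (Pi.single j a : Fin l → ℕ)) i)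
            + ∑ i, (Pi.single j a : Fin l → ℕ) i := by rw [h2]
      _ = ∑ i, ((p - (Pi.single j a : Fin l → ℕ)) i + (Pi.single j a : Fin l → ℕ) i) := by
            rw [Finset.sum_add_distrib]
      _ = ∑ i, p i := Finset.sum_congr rfl (fun i _ => h1 i)
  set S : Submodule ℂ V := Submodule.span ℂ Sset with hS
  have pairDown : ∀ (b : Fin l → ℕ) (i j : Fin l), i ≠ j →
      v (b + Pi.single i 1) ∈ S → v (b + Pi.single j 1) ∈ S → v b ∈ S := by
    intro b i j hij hA hB
    have hne : ab j - ab i ≠ 0 := sub_ne_zero.mpr (fun h => hij (hab h).symm)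
    have h3 := hthree b i j hij
    have h4 : (ab i - ab j) • v b = -(v (b + Pi.single i 1) - v (b + Pi.single j 1)) :=
      eq_neg_of_add_eq_zero_right h3
    have h5 : (ab j - ab i) • v b = v (b + Pi.single i 1) - v (b + Pi.single j 1) := by
      have h6 : (ab j - ab i) • v b = -((ab i - ab j) • v b) := by
        rw [← neg_smul, neg_sub]
      rw [h6, h4, neg_neg]
    have h6 : v b = (ab j - ab i)⁻¹ • (v (b + Pi.single i 1) - v (b + Pi.single j 1)) := by
      rw [← h5, inv_smul_smul₀ hne]
    rw [h6]
    exact Submodule.smul_mem _ _ (Submodule.sub_mem _ hA hB)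
  have L1 : ∀ (j : Fin l) (k : ℕ), k < N j →
      ∃ γ : ℝ, 0 < γ ∧
        (T ^ k) (v (N - (Pi.single j 1 : Fin l → ℕ))) - (γ : ℂ) • v (N - (Pi.single j (k + 1) : Fin l → ℕ)) ∈
          Submodule.span ℂ {x : V | ∃ p : Fin l → ℕ, p ≤ N - (Pi.single j 1 : Fin l → ℕ) ∧
            (∑ i, p i) + (k + 1) = n ∧ p ≠ N - (Pi.single j (k + 1) : Fin l → ℕ) ∧ x = v p} := by
    intro j k
    induction k with
    | zero =>
      intro _
      refine ⟨1, one_pos, ?_⟩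
      simp only [pow_zero, Module.End.one_apply, Complex.ofReal_one, one_smul, sub_self]
      exact Submodule.zero_mem _
    | succ k IH =>
      intro hk1
      have hk : k < N j := by omega
      obtain ⟨γ, hγ, hu⟩ := IH hk
      have hκ : k + 1 ≤ κ := by have := hNub j; omega
      have hNj2 : k + 2 ≤ N j := hk1
      have hNj1 : 1 ≤ N j := by omega
      have hmkpos : ∀ i, 1 ≤ (N - (Pi.single j (k + 1) : Fin l → ℕ)) i := by
        intro i
        rw [sub_single_val]
        rcases eq_or_ne i j with rfl | h
        · rw [if_pos rfl]; omega
        · rw [if_neg h]; have := hNlb i; omega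
      have hTm := hrec (N - (Pi.single j (k + 1) : Fin l → ℕ)) hmkpos
      have hjterm : (N - (Pi.single j (k + 1) : Fin l → ℕ)) - (Pi.single j 1 : Fin l → ℕ) = N - (Pi.single j (k + 2) : Fin l → ℕ) := by
        funext i
        rw [Pi.sub_apply, sub_single_val, sub_single_val]
        rcases eq_or_ne i j with rfl | h
        · rw [if_pos rfl, if_pos rfl, Pi.single_eq_same]; omega
        · rw [if_neg h, if_neg h, Pi.single_eq_of_ne h]; omega
      -- the value at slot j
      have hmkj : (N - (Pi.single j (k + 1) : Fin l → ℕ)) j = N j - (k + 1) := by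
        rw [sub_single_val, if_pos rfl]
      -- goal set
      set U : Set V := {x : V | ∃ p : Fin l → ℕ, p ≤ N - (Pi.single j 1 : Fin l → ℕ) ∧
        (∑ i, p i) + (k + 1 + 1) = n ∧ p ≠ N - (Pi.single j (k + 1 + 1) : Fin l → ℕ) ∧ x = v p} with hU
      -- membership lemma for generators of U
      have hUgen : ∀ p : Fin l → ℕ, p ≤ N - (Pi.single j 1 : Fin l → ℕ) → (∑ i, p i) + (k + 2) = n →
          p ≠ N - (Pi.single j (k + 2) : Fin l → ℕ) → v p ∈ Submodule.span ℂ U := by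
        intro p h1 h2 h3
        exact Submodule.subset_span ⟨p, h1, h2, h3, rfl⟩
      -- T u ∈ span U
      have hTu : T ((T ^ k) (v (N - (Pi.single j 1 : Fin l → ℕ))) - (γ : ℂ) • v (N - (Pi.single j (k + 1) : Fin l → ℕ)))
          ∈ Submodule.span ℂ U := by
        have hmap : T ((T ^ k) (v (N - (Pi.single j 1 : Fin l → ℕ))) - (γ : ℂ) • v (N - (Pi.single j (k + 1) : Fin l → ℕ)))
            ∈ Submodule.map T (Submodule.span ℂ {x : V | ∃ p : Fin l → ℕ,
              p ≤ N - (Pi.single j 1 : Fin l → ℕ) ∧ (∑ i, p i) + (k + 1) = n ∧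
              p ≠ N - (Pi.single j (k + 1) : Fin l → ℕ) ∧ x = v p}) := ⟨_, hu, rfl⟩
        rw [Submodule.map_span] at hmap
        refine Submodule.span_le.mpr ?_ hmap
        rintro _ ⟨x, ⟨p, hp1, hp2, hp3, rfl⟩, rfl⟩
        -- positivity of p
        have hsq : (∑ i, (N - (Pi.single j 1 : Fin l → ℕ)) i) + 1 = n := by
          rw [sum_sub_single N j 1 hNj1, hsumN]
        have hgap : ∀ i, (N - (Pi.single j 1 : Fin l → ℕ)) i ≤ p i + k := by
          intro i
          have h7 : (∑ x, ((N - (Pi.single j 1 : Fin l → ℕ)) x - p x)) + ∑ x, p x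
              = ∑ x, (N - (Pi.single j 1 : Fin l → ℕ)) x := by
            rw [← Finset.sum_add_distrib]
            refine Finset.sum_congr rfl (fun x _ => ?_)
            have hx : p x ≤ (N - (Pi.single j 1 : Fin l → ℕ)) x := hp1 x
            omega
          have h8 : (N - (Pi.single j 1 : Fin l → ℕ)) i - p i ≤ ∑ x, ((N - (Pi.single j 1 : Fin l → ℕ)) x - p x) :=
            Finset.single_le_sum (f := fun x => (N - (Pi.single j 1 : Fin l → ℕ)) x - p x)
              (fun x _ => Nat.zero_le _) (Finset.mem_univ i)
          omega
        have hppos : ∀ i, 1 ≤ p i := by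
          intro i
          have h9 := hgap i
          rw [sub_single_val] at h9
          rcases eq_or_ne i j with rfl | h
          · rw [if_pos rfl] at h9; omega
          · rw [if_neg h] at h9; have := hNlb i; omega
        rw [hrec p hppos]
        refine Submodule.sum_mem _ ?_
        intro i _
        refine Submodule.smul_mem _ _ (hUgen _ ?_ ?_ ?_)
        · intro i'
          show (p - (Pi.single i 1 : Fin l → ℕ)) i' ≤ (N - (Pi.single j 1 : Fin l → ℕ)) i'
          have h10 : p i' ≤ (N - (Pi.single j 1 : Fin l → ℕ)) i' := hp1 i'
          rw [sub_single_val]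
          rcases eq_or_ne i' i with rfl | h
          · rw [if_pos rfl]; omega
          · rw [if_neg h]; exact h10
        · have h11 := sum_sub_single p i 1 (hppos i)
          omega
        · intro heq
          rcases eq_or_ne i j with heqij | hij
          · rw [heqij] at heq
            apply hp3
            funext i'
            have h8 := congrFun heq i'
            rw [Pi.sub_apply, sub_single_val] at h8
            rw [sub_single_val]
            rcases eq_or_ne i' j with h9 | h9
            · subst h9
              rw [if_pos rfl] at h8 ⊢
              rw [Pi.single_eq_same] at h8
              have := hppos i'
              have h12 : p i' ≤ (N - (Pi.single i' 1 : Fin l → ℕ)) i' := hp1 i'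
              rw [sub_single_val, if_pos rfl] at h12
              omega
            · rw [if_neg h9] at h8 ⊢
              rw [Pi.single_eq_of_ne h9] at h8
              omega
          · have h8 := congrFun heq i
            rw [Pi.sub_apply, Pi.single_eq_same, sub_single_val, if_neg hij] at h8
            have h9 : p i ≤ (N - (Pi.single j 1 : Fin l → ℕ)) i := hp1 i
            rw [sub_single_val, if_neg hij] at h9
            have := hNlb i
            omega
      -- the decomposition of T (v m_k)
      have hsplit : T (v (N - (Pi.single j (k + 1) : Fin l → ℕ))) =
          ((c j : ℂ) + ((N - (Pi.single j (k + 1) : Fin l → ℕ)) j : ℕ)) • v (N - (Pi.single j (k + 2) : Fin l → ℕ))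
          + ∑ i ∈ Finset.univ.erase j,
              ((c i : ℂ) + ((N - (Pi.single j (k + 1) : Fin l → ℕ)) i : ℕ)) •
                v ((N - (Pi.single j (k + 1) : Fin l → ℕ)) - (Pi.single i 1 : Fin l → ℕ)) := by
        rw [hTm, ← Finset.add_sum_erase _ _ (Finset.mem_univ j), hjterm]
      have herase : (∑ i ∈ Finset.univ.erase j,
          ((c i : ℂ) + ((N - (Pi.single j (k + 1) : Fin l → ℕ)) i : ℕ)) •
            v ((N - (Pi.single j (k + 1) : Fin l → ℕ)) - (Pi.single i 1 : Fin l → ℕ))) ∈ Submodule.span ℂ U := by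
        refine Submodule.sum_mem _ ?_
        intro i hi
        refine Submodule.smul_mem _ _ (hUgen _ ?_ ?_ ?_)
        · have hij : i ≠ j := (Finset.mem_erase.mp hi).1
          intro i'
          show ((N - (Pi.single j (k + 1) : Fin l → ℕ)) - (Pi.single i 1 : Fin l → ℕ)) i'
              ≤ (N - (Pi.single j 1 : Fin l → ℕ)) i'
          rw [Pi.sub_apply, sub_single_val, sub_single_val]
          rcases eq_or_ne i' j with rfl | h
          · rw [if_pos rfl, if_pos rfl, Pi.single_eq_of_ne (Ne.symm hij)]; omega
          · rw [if_neg h, if_neg h]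
            rcases eq_or_ne i' i with rfl | h2
            · rw [Pi.single_eq_same]; omega
            · rw [Pi.single_eq_of_ne h2]; omega
        · have hij : i ≠ j := (Finset.mem_erase.mp hi).1
          have hNi : 1 ≤ (N - (Pi.single j (k + 1) : Fin l → ℕ)) i := hmkpos i
          have h11 := sum_sub_single (N - (Pi.single j (k + 1) : Fin l → ℕ)) i 1 hNi
          have h12 := sum_sub_single N j (k + 1) (by omega)
          rw [hsumN] at h12
          omega
        · have hij : i ≠ j := (Finset.mem_erase.mp hi).1
          intro heq
          have h8 := congrFun heq i
          rw [Pi.sub_apply, Pi.single_eq_same, sub_single_val, if_neg hij,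
            sub_single_val, if_neg hij] at h8
          have := hNlb i
          omega
      -- assemble
      refine ⟨γ * (c j + ((N - (Pi.single j (k + 1) : Fin l → ℕ)) j : ℕ)), ?_, ?_⟩
      · have : (0 : ℝ) < c j + ((N - (Pi.single j (k + 1) : Fin l → ℕ)) j : ℕ) :=
          add_pos_of_pos_of_nonneg (hc j) (Nat.cast_nonneg _)
        exact mul_pos hγ this
      · have hpow : (T ^ (k + 1)) (v (N - (Pi.single j 1 : Fin l → ℕ)))
            = T ((T ^ k) (v (N - (Pi.single j 1 : Fin l → ℕ)))) := by
          rw [pow_succ']; rfl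
        have hTk : (T ^ k) (v (N - (Pi.single j 1 : Fin l → ℕ)))
            = ((T ^ k) (v (N - (Pi.single j 1 : Fin l → ℕ))) - (γ : ℂ) • v (N - (Pi.single j (k + 1) : Fin l → ℕ)))
              + (γ : ℂ) • v (N - (Pi.single j (k + 1) : Fin l → ℕ)) := by abel
        have key : (T ^ (k + 1)) (v (N - (Pi.single j 1 : Fin l → ℕ)))
            - ((γ * (c j + ((N - (Pi.single j (k + 1) : Fin l → ℕ)) j : ℕ)) : ℝ) : ℂ)
                • v (N - (Pi.single j (k + 1 + 1) : Fin l → ℕ))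
            = T ((T ^ k) (v (N - (Pi.single j 1 : Fin l → ℕ))) - (γ : ℂ) • v (N - (Pi.single j (k + 1) : Fin l → ℕ)))
              + (γ : ℂ) • (∑ i ∈ Finset.univ.erase j,
                  ((c i : ℂ) + ((N - (Pi.single j (k + 1) : Fin l → ℕ)) i : ℕ)) •
                    v ((N - (Pi.single j (k + 1) : Fin l → ℕ)) - (Pi.single i 1 : Fin l → ℕ))) := by
          rw [hpow]
          conv_lhs => rw [hTk]
          rw [map_add, map_smul, hsplit]
          push_cast
          module
        rw [key]
        exact Submodule.add_mem _ hTu (Submodule.smul_mem _ _ herase)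
  have main : ∀ (t : ℕ) (m : Fin l → ℕ), m ≤ N → m ≠ N → (∑ i, m i) + t = n → v m ∈ S := by
    intro t
    induction t using Nat.strong_induction_on with
    | _ t IH =>
    intro m hm hmN hdeg
    obtain ⟨j, hj⟩ : ∃ j, m j < N j := by
      by_contra h
      push_neg at h
      apply hmN
      funext i
      have h2 : m i ≤ N i := hm i
      have := h i
      omega
    have hsumlt : ∑ i, m i < n := by
      have h2 : ∑ i, m i < ∑ i, N i :=
        Finset.sum_lt_sum (fun x _ => hm x) ⟨j, Finset.mem_univ j, hj⟩
      omega
    have hq : ∀ q : Fin l → ℕ, q ≤ N → q ≠ N → (∑ i, q i) = (∑ i, m i) + 1 → v q ∈ S := by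
      intro q h1 h2 h3
      exact IH (t - 1) (by omega) q h1 h2 (by omega)
    have claim1 : ∀ p : Fin l → ℕ, p ≤ N → (∑ i, p i) = (∑ i, m i) →
        (∃ i i' : Fin l, i ≠ i' ∧ p i < N i ∧ p i' < N i') → v p ∈ S := by
      intro p hp hdegp hex
      obtain ⟨i, i', hii, hiN, hi'N⟩ := hex
      have haux : ∀ (a b : Fin l), a ≠ b → p a < N a → p b < N b →
          v (p + Pi.single a 1) ∈ S := by
        intro a b hab2 haN hbN
        apply hq (p + Pi.single a 1)
        · intro x
          show (p + (Pi.single a 1 : Fin l → ℕ)) x ≤ N x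
          have h5 : p x ≤ N x := hp x
          rcases eq_or_ne x a with h | h
          · rw [Pi.add_apply, h, Pi.single_eq_same]
            have := h ▸ haN
            omega
          · rw [Pi.add_apply, Pi.single_eq_of_ne h]
            omega
        · intro hcon
          have h5 := congrFun hcon b
          rw [Pi.add_apply, Pi.single_eq_of_ne (Ne.symm hab2)] at h5
          omega
        · rw [sum_add_single]
          omega
      exact pairDown p i i' hii (haux i i' hii hiN hi'N) (haux i' i (Ne.symm hii) hi'N hiN)
    by_cases htwo : ∃ i i' : Fin l, i ≠ i' ∧ m i < N i ∧ m i' < N i'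
    · exact claim1 m hm rfl htwo
    · have huniq : ∀ i, i ≠ j → m i = N i := by
        intro i hij
        by_contra h
        have h2 : m i < N i := lt_of_le_of_ne (hm i) h
        exact htwo ⟨i, j, hij, h2, hj⟩
      have hNm : N = m + Pi.single j (N j - m j) := by
        funext i
        rcases eq_or_ne i j with h | h
        · rw [Pi.add_apply, h, Pi.single_eq_same]
          have := h ▸ hj
          omega
        · rw [Pi.add_apply, Pi.single_eq_of_ne h]
          have := huniq i h
          omega
      have hts : (∑ i, m i) + (N j - m j) = n := by
        have h6 := sum_add_single m j (N j - m j)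
        rw [← hNm] at h6
        omega
      have hkNj : N j - m j - 1 < N j := by omega
      obtain ⟨γ, hγ, hmem⟩ := L1 j (N j - m j - 1) hkNj
      have hmk : N - (Pi.single j (N j - m j - 1 + 1) : Fin l → ℕ) = m := by
        funext i
        rw [sub_single_val]
        rcases eq_or_ne i j with h | h
        · rw [if_pos h, h]
          omega
        · rw [if_neg h]
          exact (huniq i h).symm
      rw [hmk] at hmem
      have hUS : Submodule.span ℂ {x : V | ∃ p : Fin l → ℕ,
          p ≤ N - (Pi.single j 1 : Fin l → ℕ) ∧
          (∑ i, p i) + (N j - m j - 1 + 1) = n ∧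
          p ≠ m ∧ x = v p} ≤ S := by
        apply Submodule.span_le.mpr
        rintro x ⟨p, hp1, hp2, hp3, rfl⟩
        have hpj : p j < N j := by
          have h5 : p j ≤ (N - (Pi.single j 1 : Fin l → ℕ)) j := hp1 j
          rw [sub_single_val, if_pos rfl] at h5
          omega
        have hple : p ≤ N := by
          intro i
          show p i ≤ N i
          have h5 : p i ≤ (N - (Pi.single j 1 : Fin l → ℕ)) i := hp1 i
          rw [sub_single_val] at h5
          rcases eq_or_ne i j with h | h
          · rw [if_pos h] at h5
            rw [h] at h5 ⊢
            omega
          · rw [if_neg h] at h5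
            exact h5
        have hex2 : ∃ i, i ≠ j ∧ p i < N i := by
          by_contra hcon
          push_neg at hcon
          apply hp3
          funext i
          have hNp : N = p + Pi.single j (N j - p j) := by
            funext i2
            rcases eq_or_ne i2 j with h | h
            · rw [Pi.add_apply, h, Pi.single_eq_same]
              have := h ▸ hpj
              omega
            · rw [Pi.add_apply, Pi.single_eq_of_ne h]
              have h7 := hcon i2 h
              have h8 : p i2 ≤ N i2 := hple i2
              omega
          have h6 := sum_add_single p j (N j - p j)
          rw [← hNp] at h6
          rcases eq_or_ne i j with h | h
          · rw [h]
            omega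
          · have h7 := hcon i h
            have h8 : p i ≤ N i := hple i
            have h9 := huniq i h
            omega
        obtain ⟨i2, hi2j, hi2⟩ := hex2
        have hdegp : ∑ i, p i = ∑ i, m i := by omega
        exact claim1 p hple hdegp ⟨j, i2, Ne.symm hi2j, hpj, hi2⟩
      have hgS : (T ^ (N j - m j - 1)) (v (N - Pi.single j 1)) ∈ S :=
        Submodule.subset_span ⟨j, N j - m j - 1, hkNj, rfl⟩
      have hγ0 : (γ : ℂ) ≠ 0 := by exact_mod_cast hγ.ne'
      have h9 : (γ : ℂ) • v m ∈ S := by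
        have h10 := Submodule.sub_mem S hgS (hUS hmem)
        have h11 : (T ^ (N j - m j - 1)) (v (N - Pi.single j 1))
            - ((T ^ (N j - m j - 1)) (v (N - Pi.single j 1)) - (γ : ℂ) • v m)
            = (γ : ℂ) • v m := by abel
        rw [h11] at h10
        exact h10
      have h12 : v m = (γ : ℂ)⁻¹ • ((γ : ℂ) • v m) := (inv_smul_smul₀ hγ0 _).symm
      rw [h12]
      exact Submodule.smul_mem _ _ h9
  have final : ∀ (d : ℕ) (m : Fin l → ℕ), (∑ i, m i) = d → d < n → v m ∈ S := by
    intro d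
    induction d using Nat.strong_induction_on with
    | _ d IH =>
    intro m hdm hdn
    obtain ⟨b, hb, hbs⟩ := exists_index_le_aux N d (by rw [hsumN]; omega)
    have hbN : b ≠ N := by
      intro h
      rw [h, hsumN] at hbs
      omega
    have hvb : v b ∈ S := main (n - d) b hb hbN (by omega)
    have hex := exchange_aux hthree (∑ i, (m i - b i)) m b le_rfl (by omega)
    have hsub : Submodule.span ℂ {x : V | ∃ p : Fin l → ℕ, (∑ i, p i) < ∑ i, m i ∧ x = v p}
        ≤ S := by
      apply Submodule.span_le.mpr
      rintro x ⟨p, hp, rfl⟩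
      exact IH (∑ i, p i) (by omega) p rfl (by omega)
    have h13 : v m = (v m - v b) + v b := by abel
    rw [h13]
    exact Submodule.add_mem _ (hsub hex) hvb
  apply le_antisymm
  · apply Submodule.span_le.mpr
    rintro x ⟨m, hmn, rfl⟩
    exact final (∑ i, m i) m rfl hmn
  · apply Submodule.span_le.mpr
    rintro x ⟨j, k, hk, rfl⟩
    obtain ⟨γ, hγ, hmem⟩ := L1 j k hk
    have hsl : (∑ i, (N - (Pi.single j (k + 1) : Fin l → ℕ)) i) + (k + 1) = n := by
      rw [sum_sub_single N j (k + 1) (by omega), hsumN]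
    have h1 : v (N - (Pi.single j (k + 1) : Fin l → ℕ)) ∈
        Submodule.span ℂ {x : V | ∃ m : Fin l → ℕ, (∑ i, m i) < n ∧ x = v m} :=
      Submodule.subset_span ⟨N - (Pi.single j (k + 1) : Fin l → ℕ), by omega, rfl⟩
    have h2 : Submodule.span ℂ {x : V | ∃ p : Fin l → ℕ,
        p ≤ N - (Pi.single j 1 : Fin l → ℕ) ∧ (∑ i, p i) + (k + 1) = n ∧
        p ≠ N - (Pi.single j (k + 1) : Fin l → ℕ) ∧ x = v p} ≤
        Submodule.span ℂ {x : V | ∃ m : Fin l → ℕ, (∑ i, m i) < n ∧ x = v m} := by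
      apply Submodule.span_le.mpr
      rintro x ⟨p, hp1, hp2, hp3, rfl⟩
      exact Submodule.subset_span ⟨p, by omega, rfl⟩
    have h3 : (T ^ k) (v (N - Pi.single j 1))
        = ((T ^ k) (v (N - Pi.single j 1)) - (γ : ℂ) • v (N - (Pi.single j (k + 1) : Fin l → ℕ)))
          + (γ : ℂ) • v (N - (Pi.single j (k + 1) : Fin l → ℕ)) := by abel
    rw [h3]
    exact Submodule.add_mem _ (h2 hmem) (Submodule.smul_mem _ _ h1)
end

section
/- Step 1 of Proposition 2 (abstract version): Under hypotheses (i) and (ii) of the abstract recurrence setup, for every multi-index s with 0 < s ≤ 𝐧 (entrywise), the vector v_{𝐧 − s} lies in span{z^k · v_{𝐧 − e_j} : 0 ≤ k < 𝐧_j, 1 ≤ j ≤ l}. -/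
private lemma aux_span_step1 (l : ℕ) (c : Fin l → ℝ) (hc : ∀ j, 0 < c j)
    (ab : Fin l → ℂ) (hab : Function.Injective ab)
    (V : Type*) [AddCommGroup V] [Module ℂ V]
    (T : V →ₗ[ℂ] V) (v : (Fin l → ℕ) → V)
    (hrec : ∀ k : Fin l → ℕ, (∀ j, 1 ≤ k j) →
      T (v k) = ∑ j, (((c j : ℂ) + (k j : ℕ)) • v (k - Pi.single j 1)))
    (hthree : ∀ (k : Fin l → ℕ) (i j : Fin l), i ≠ j →
      v (k + Pi.single i 1) - v (k + Pi.single j 1) + (ab i - ab j) • v k = 0)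
    (nn : Fin l → ℕ) (hnn : ∀ i j, nn i ≤ nn j + 1) :
    ∀ N (s : Fin l → ℕ), (∑ i, s i) ≤ N → s ≠ 0 → (∀ i, s i ≤ nn i) →
      v (nn - s) ∈ Submodule.span ℂ {x : V | ∃ m : Fin l, ∃ k : ℕ,
        (k + 1 ≤ s m ∨ ∃ i, k + 2 ≤ s i) ∧
        x = (T ^ k) (v (nn - Pi.single m 1))} := by
  have hsub : ∀ s₁ s₂ : Fin l → ℕ,
      (∀ m k, (k+1 ≤ s₁ m ∨ ∃ i, k+2 ≤ s₁ i) → (k+1 ≤ s₂ m ∨ ∃ i, k+2 ≤ s₂ i)) →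
      ({x : V | ∃ m : Fin l, ∃ k : ℕ, (k+1 ≤ s₁ m ∨ ∃ i, k+2 ≤ s₁ i) ∧
          x = (T^k) (v (nn - Pi.single m 1))}
        ⊆ {x : V | ∃ m : Fin l, ∃ k : ℕ, (k+1 ≤ s₂ m ∨ ∃ i, k+2 ≤ s₂ i) ∧
          x = (T^k) (v (nn - Pi.single m 1))}) := by
    rintro s₁ s₂ h x ⟨m, k, hD, rfl⟩
    exact ⟨m, k, h m k hD, rfl⟩
  have hsum' : ∀ (s : Fin l → ℕ) (p : Fin l), 1 ≤ s p →
      (∑ i : Fin l, (s - Pi.single p 1 : Fin l → ℕ) i) + 1 = ∑ i : Fin l, s i := by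
    intro s p hp
    rw [← Finset.sum_erase_add _ _ (Finset.mem_univ p),
        ← Finset.sum_erase_add _ s (Finset.mem_univ p), add_assoc]
    congr 1
    · refine Finset.sum_congr rfl fun x hx => ?_
      rw [Pi.sub_apply, Pi.single_eq_of_ne (Finset.ne_of_mem_erase hx)]
      omega
    · rw [Pi.sub_apply, Pi.single_eq_same]
      omega
  intro N
  induction N with
  | zero =>
    intro s hsum hs0 _
    exfalso
    obtain ⟨j, hj⟩ := Function.ne_iff.mp hs0
    simp only [Pi.zero_apply] at hj
    have h1 : 1 ≤ s j := Nat.one_le_iff_ne_zero.mpr hj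
    have h2 := Finset.single_le_sum (f := s) (fun i _ => Nat.zero_le _) (Finset.mem_univ j)
    omega
  | succ N ih =>
    intro s hsum hs0 hslej
    obtain ⟨j, hj⟩ := Function.ne_iff.mp hs0
    simp only [Pi.zero_apply] at hj
    have hsj : 1 ≤ s j := Nat.one_le_iff_ne_zero.mpr hj
    by_cases hmulti : ∃ i, i ≠ j ∧ s i ≠ 0
    · -- at least two coordinates of s are positive: use the three-term identity
      obtain ⟨i, hij, hi⟩ := hmulti
      have hsi : 1 ≤ s i := Nat.one_le_iff_ne_zero.mpr hi
      have hIdx : ∀ p : Fin l, 1 ≤ s p →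
          nn - (s - Pi.single p 1) = (nn - s) + Pi.single p 1 := by
        intro p hp
        funext x
        simp only [Pi.sub_apply, Pi.add_apply]
        by_cases hx : x = p
        · subst hx
          simp only [Pi.single_eq_same]
          have h1 := hslej x
          omega
        · simp only [Pi.single_eq_of_ne hx]
          omega
      have h3 := hthree (nn - s) i j hij
      rw [← hIdx i hsi, ← hIdx j hsj] at h3
      have habij : ab i - ab j ≠ 0 := sub_ne_zero.mpr fun h => hij (hab h)
      rw [← Submodule.smul_mem_iff _ habij]
      rw [add_comm, add_eq_zero_iff_eq_neg] at h3
      have hkey : (ab i - ab j) • v (nn - s)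
          = v (nn - (s - Pi.single j 1)) - v (nn - (s - Pi.single i 1)) := by
        rw [h3]; abel
      rw [hkey]
      have hmem : ∀ p : Fin l, 1 ≤ s p → (∃ q, q ≠ p ∧ 1 ≤ s q) →
          v (nn - (s - Pi.single p 1)) ∈ Submodule.span ℂ
            {x : V | ∃ m : Fin l, ∃ k : ℕ, (k+1 ≤ s m ∨ ∃ i, k+2 ≤ s i) ∧
              x = (T^k) (v (nn - Pi.single m 1))} := by
        rintro p hp ⟨q, hq, hq1⟩
        have hptle : ∀ x, (s - Pi.single p 1 : Fin l → ℕ) x ≤ s x := fun x => Nat.sub_le _ _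
        refine Submodule.span_mono (hsub _ s ?_) (ih (s - Pi.single p 1) ?_ ?_ ?_)
        · intro m k hD
          rcases hD with h | ⟨i', h⟩
          · exact Or.inl (le_trans h (hptle m))
          · exact Or.inr ⟨i', le_trans h (hptle i')⟩
        · have := hsum' s p hp
          omega
        · refine Function.ne_iff.mpr ⟨q, ?_⟩
          rw [Pi.sub_apply, Pi.single_eq_of_ne hq]
          simp only [Pi.zero_apply]
          omega
        · intro x
          exact le_trans (hptle x) (hslej x)
      exact sub_mem (hmem j hsj ⟨i, hij, hsi⟩)
        (hmem i hsi ⟨j, fun h => hij h.symm, hsj⟩)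
    · -- s is supported at the single index j
      push_neg at hmulti
      have hz : ∀ x, x ≠ j → s x = 0 := hmulti
      by_cases ht1 : s j = 1
      · -- base case s = e_j
        apply Submodule.subset_span
        refine ⟨j, 0, Or.inl (by omega), ?_⟩
        have hseq : s = Pi.single j 1 := by
          funext x
          by_cases hx : x = j
          · subst hx; simpa using ht1
          · simp [Pi.single_eq_of_ne hx, hz x hx]
        rw [hseq, pow_zero, Module.End.one_apply]
      · have ht2 : 2 ≤ s j := by omega
        have hnm : ∀ m, s j ≤ nn m + 1 := fun m => le_trans (hslej j) (hnn j m)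
        set s' : Fin l → ℕ := s - Pi.single j 1 with hs'def
        have hs'j : s' j = s j - 1 := by
          rw [hs'def, Pi.sub_apply, Pi.single_eq_same]
        have hs'x : ∀ x, x ≠ j → s' x = s x := by
          intro x hx
          rw [hs'def, Pi.sub_apply, Pi.single_eq_of_ne hx]
          omega
        set k₀ : Fin l → ℕ := nn - s' with hk₀def
        have hk₀v : ∀ x, k₀ x = nn x - s' x := fun x => rfl
        have hk₀j : k₀ j = nn j - (s j - 1) := by rw [hk₀v j, hs'j]
        have hk₀x : ∀ x, x ≠ j → k₀ x = nn x := by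
          intro x hx
          rw [hk₀v x, hs'x x hx, hz x hx]
          omega
        have hk₀pos : ∀ m, 1 ≤ k₀ m := by
          intro m
          by_cases hm : m = j
          · rw [hm, hk₀j]; have := hslej j; omega
          · rw [hk₀x m hm]; have := hnm m; omega
        have hT := hrec k₀ hk₀pos
        rw [← Finset.sum_erase_add _ _ (Finset.mem_univ j)] at hT
        have hIdx0 : k₀ - Pi.single j 1 = nn - s := by
          funext x
          have h1 := hslej x
          simp only [Pi.sub_apply]
          by_cases hx : x = j
          · subst hx
            rw [Pi.single_eq_same, hk₀j]
            omega
          · rw [Pi.single_eq_of_ne hx, hk₀x x hx]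
            have := hz x hx
            omega
        rw [hIdx0] at hT
        have haj : ((c j : ℂ) + (k₀ j : ℕ)) ≠ 0 := by
          intro h
          have h2 : ((c j + (k₀ j : ℝ) : ℝ) : ℂ) = 0 := by push_cast; linear_combination h
          rw [Complex.ofReal_eq_zero] at h2
          have h3 : (0:ℝ) ≤ (k₀ j : ℝ) := Nat.cast_nonneg _
          linarith [hc j]
        rw [← Submodule.smul_mem_iff _ haj]
        have hkey := eq_sub_of_add_eq ((add_comm _ _).trans hT.symm)
        rw [hkey]
        have hDs' : ∀ m k, (k+1 ≤ s' m ∨ ∃ i, k+2 ≤ s' i) →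
            (k+1 ≤ s m ∨ ∃ i, k+2 ≤ s i) := by
          intro m k hD
          have hle : ∀ x, s' x ≤ s x := fun x => Nat.sub_le _ _
          rcases hD with h | ⟨i', h⟩
          · exact Or.inl (le_trans h (hle m))
          · exact Or.inr ⟨i', le_trans h (hle i')⟩
        have hvk₀ : v k₀ ∈ Submodule.span ℂ
            {x : V | ∃ m : Fin l, ∃ k : ℕ, (k+1 ≤ s' m ∨ ∃ i, k+2 ≤ s' i) ∧
              x = (T^k) (v (nn - Pi.single m 1))} := by
          refine ih s' ?_ ?_ ?_
          · have h5 := hsum' s j hsj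
            have h4 : (∑ i : Fin l, s' i) = ∑ i : Fin l, (s - Pi.single j 1 : Fin l → ℕ) i := by
              rw [hs'def]
            omega
          · refine Function.ne_iff.mpr ⟨j, ?_⟩
            rw [hs'j]
            simp only [Pi.zero_apply]
            omega
          · intro x
            exact le_trans (Nat.sub_le _ _) (hslej x)
        have hvk₀s : v k₀ ∈ Submodule.span ℂ
            {x : V | ∃ m : Fin l, ∃ k : ℕ, (k+1 ≤ s m ∨ ∃ i, k+2 ≤ s i) ∧
              x = (T^k) (v (nn - Pi.single m 1))} :=
          Submodule.span_mono (hsub s' s hDs') hvk₀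
        refine sub_mem ?_ ?_
        · -- T (v k₀) is in the span
          have h1 : T (v k₀) ∈ Submodule.map T (Submodule.span ℂ
              {x : V | ∃ m : Fin l, ∃ k : ℕ, (k+1 ≤ s' m ∨ ∃ i, k+2 ≤ s' i) ∧
                x = (T^k) (v (nn - Pi.single m 1))}) :=
            Submodule.mem_map_of_mem hvk₀
          rw [Submodule.map_span] at h1
          refine Submodule.span_mono ?_ h1
          rintro x ⟨y, ⟨m, k, hD, rfl⟩, rfl⟩
          refine ⟨m, k+1, ?_, by rw [pow_succ']; rfl⟩
          rcases hD with h | ⟨i', h⟩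
          · by_cases hm : m = j
            · subst hm; rw [hs'j] at h; left; omega
            · exfalso; rw [hs'x m hm, hz m hm] at h; omega
          · right
            refine ⟨j, ?_⟩
            by_cases hi' : i' = j
            · subst hi'; rw [hs'j] at h; omega
            · exfalso; rw [hs'x i' hi', hz i' hi'] at h; omega
        · -- the remaining sum is in the span
          refine Submodule.sum_mem _ fun m hm => Submodule.smul_mem _ _ ?_
          have hmj : m ≠ j := Finset.ne_of_mem_erase hm
          have hjm : j ≠ m := fun h => hmj h.symm
          set q : Fin l → ℕ := k₀ - Pi.single m 1 with hqdef
          have hqm : q m = k₀ m - 1 := by rw [hqdef, Pi.sub_apply, Pi.single_eq_same]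
          have hqx : ∀ x, x ≠ m → q x = k₀ x := by
            intro x hx
            rw [hqdef, Pi.sub_apply, Pi.single_eq_of_ne hx]
            omega
          set s₃ : Fin l → ℕ := s - Pi.single j 2 + Pi.single m 1 with hs₃def
          have hs₃j : s₃ j = s j - 2 := by
            rw [hs₃def, Pi.add_apply, Pi.sub_apply, Pi.single_eq_same,
              Pi.single_eq_of_ne hjm, add_zero]
          have hs₃m : s₃ m = 1 := by
            rw [hs₃def, Pi.add_apply, Pi.sub_apply, Pi.single_eq_same,
              Pi.single_eq_of_ne hmj, hz m hmj]
            omega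
          have hs₃x : ∀ x, x ≠ j → x ≠ m → s₃ x = 0 := by
            intro x hx hx2
            rw [hs₃def, Pi.add_apply, Pi.sub_apply, Pi.single_eq_of_ne hx,
              Pi.single_eq_of_ne hx2, hz x hx]
            omega
          have h3 := hthree q j m hjm
          have hq1 : q + Pi.single m 1 = k₀ := by
            funext x
            simp only [Pi.add_apply]
            by_cases hx : x = m
            · rw [hx, Pi.single_eq_same, hqm]
              have := hk₀pos m
              omega
            · rw [Pi.single_eq_of_ne hx, hqx x hx, add_zero]
          have hq2 : q + Pi.single j 1 = nn - s₃ := by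
            funext x
            simp only [Pi.add_apply, Pi.sub_apply]
            by_cases hx : x = j
            · rw [hx, Pi.single_eq_same, hqx j hjm, hs₃j, hk₀j]
              have h1 := hslej j
              omega
            · rw [Pi.single_eq_of_ne hx, add_zero]
              by_cases hx2 : x = m
              · rw [hx2, hqm, hs₃m, hk₀x m hmj]
              · rw [hqx x hx2, hs₃x x hx hx2, hk₀x x hx]
                omega
          rw [hq2, hq1] at h3
          have habjm : ab j - ab m ≠ 0 := sub_ne_zero.mpr fun h => hjm (hab h)
          rw [← Submodule.smul_mem_iff _ habjm]
          rw [add_comm, add_eq_zero_iff_eq_neg] at h3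
          have hkey2 : (ab j - ab m) • v q = v k₀ - v (nn - s₃) := by rw [h3]; abel
          rw [hkey2]
          refine sub_mem hvk₀s ?_
          have hSs : ∑ x : Fin l, s x = s j :=
            Finset.sum_eq_single_of_mem j (Finset.mem_univ j) (fun x _ hx => hz x hx)
          have hB : v (nn - s₃) ∈ Submodule.span ℂ
              {x : V | ∃ m' : Fin l, ∃ k : ℕ, (k+1 ≤ s₃ m' ∨ ∃ i, k+2 ≤ s₃ i) ∧
                x = (T^k) (v (nn - Pi.single m' 1))} := by
            refine ih s₃ ?_ ?_ ?_
            · have hs₃v : ∀ x, s₃ x =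
                  (if x = j then s j - 2 else 0) + (if x = m then 1 else 0) := by
                intro x
                by_cases hx : x = j
                · subst hx
                  rw [hs₃j, if_pos rfl, if_neg hjm, add_zero]
                · by_cases hx2 : x = m
                  · subst hx2
                    rw [hs₃m, if_neg hx, if_pos rfl, zero_add]
                  · rw [hs₃x x hx hx2, if_neg hx, if_neg hx2, add_zero]
              have hsum₃ : ∑ x : Fin l, s₃ x = (s j - 2) + 1 := by
                rw [Finset.sum_congr rfl (fun x _ => hs₃v x), Finset.sum_add_distrib,
                  Finset.sum_ite_eq' Finset.univ j (fun _ => s j - 2),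
                  Finset.sum_ite_eq' Finset.univ m (fun _ => 1),
                  if_pos (Finset.mem_univ j), if_pos (Finset.mem_univ m)]
              omega
            · refine Function.ne_iff.mpr ⟨m, ?_⟩
              rw [hs₃m]
              simp
            · intro x
              have h1 := hslej x
              have h2 := hnm x
              by_cases hx : x = j
              · subst hx; rw [hs₃j]; omega
              · by_cases hx2 : x = m
                · subst hx2; rw [hs₃m]; omega
                · rw [hs₃x x hx hx2]; omega
          refine Submodule.span_mono (hsub s₃ s ?_) hB
          intro m' k' hD
          rcases hD with h | ⟨i', h⟩
          · by_cases hm' : m' = j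
            · subst hm'; rw [hs₃j] at h; left; omega
            · by_cases hm'' : m' = m
              · subst hm''; rw [hs₃m] at h
                exact Or.inr ⟨j, by omega⟩
              · exfalso; rw [hs₃x m' hm' hm''] at h; omega
          · by_cases hi' : i' = j
            · subst hi'; rw [hs₃j] at h
              exact Or.inr ⟨i', by omega⟩
            · by_cases hi'' : i' = m
              · subst hi''; rw [hs₃m] at h; exfalso; omega
              · exfalso; rw [hs₃x i' hi' hi''] at h; omega

/-- Step 1 of Proposition 2, abstract form: under the recurrence
(i) and the three-term identity (ii), for every multi-index `s` with
`0 < s ≤ 𝐧` (entrywise), the vector `v (𝐧 - s)` lies in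
`span {T^k (v (𝐧 - e_j)) : 0 ≤ k < 𝐧_j, 1 ≤ j ≤ l}`, where
`𝐧 = (κ+1,…,κ+1,κ,…,κ)` with `κ+1` in the first `r` slots and `n = κ l + r`. -/
theorem step1_v_nn_sub_s_mem_span
    (l : ℕ) (hl : 0 < l) (c : Fin l → ℝ) (hc : ∀ j, 0 < c j)
    (ab : Fin l → ℂ) (hab : Function.Injective ab)
    (V : Type*) [AddCommGroup V] [Module ℂ V]
    (T : V →ₗ[ℂ] V) (v : (Fin l → ℕ) → V)
    (hrec : ∀ k : Fin l → ℕ, (∀ j, 1 ≤ k j) →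
      T (v k) = ∑ j, (((c j : ℂ) + (k j : ℕ)) • v (k - Pi.single j 1)))
    (hthree : ∀ (k : Fin l → ℕ) (i j : Fin l), i ≠ j →
      v (k + Pi.single i 1) - v (k + Pi.single j 1) + (ab i - ab j) • v k = 0)
    (κ r n : ℕ) (hr : r < l) (hn : n = κ * l + r)
    (s : Fin l → ℕ)
    (hs_le : s ≤ fun i : Fin l => if (i : ℕ) < r then κ + 1 else κ)
    (hs_pos : s ≠ 0) :
    v ((fun i : Fin l => if (i : ℕ) < r then κ + 1 else κ) - s) ∈
      Submodule.span ℂ {x : V | ∃ j : Fin l, ∃ k : ℕ,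
        k < (if (j : ℕ) < r then κ + 1 else κ) ∧
        x = (T ^ k) (v ((fun i : Fin l => if (i : ℕ) < r then κ + 1 else κ)
              - Pi.single j 1))} := by
  have hsle' : ∀ i : Fin l, s i ≤ if (i : ℕ) < r then κ + 1 else κ := fun i => hs_le i
  have key := aux_span_step1 l c hc ab hab V T v hrec hthree
      (fun i : Fin l => if (i : ℕ) < r then κ + 1 else κ)
      (fun i j => by
        by_cases hi : (i:ℕ) < r <;> by_cases hj : (j:ℕ) < r <;> simp [hi, hj] <;> omega)
      (∑ i, s i) s le_rfl hs_pos hsle'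
  refine Submodule.span_mono ?_ key
  rintro x ⟨m, k, hD, rfl⟩
  refine ⟨m, k, ?_, rfl⟩
  rcases hD with h | ⟨i, h⟩
  · have := hsle' m; omega
  · have h1 := hsle' i
    have h2 := hsle' m
    by_cases hi : (i:ℕ) < r <;> by_cases hm : (m:ℕ) < r <;>
      simp only [hi, hm, if_true, if_false] at h1 h2 ⊢ <;> omega
end
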